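/- Fix M ≥ 2 and set α_k = M^{-k}, β_k = M^{2k} for k ≥ 1. The series φ(z₁,z₂) = log|z₁| + Σ_{k=1}^∞ α_k · log(|z₁| + |z₂/k|^{β_k}) converges to a plurisubharmonic function on ℂ², not identically -∞. -/

import Mathlib

open MeasureTheory Filter Metric Complex Set Topology

noncomputable section

/-- `e2 x` represents `e^{-2x}` for extended-real `x` (value `0` at `x = ⊥`,
where the correct value `+∞` cannot be represented in `ℝ`; in all statements the
`⊥`-locus is negligible or handled separately). -/
def e2 (x : EReal) : ℝ := if x = ⊥ then 0 else Real.exp (-2 * x.toReal)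

/-- Subharmonicity of `u : ℂ → EReal` on `U`: upper semicontinuity together with
the sub-mean-value inequality over all sufficiently small circles. -/
def SubharmonicOn' (u : ℂ → EReal) (U : Set ℂ) : Prop :=
  UpperSemicontinuousOn u U ∧
    ∀ z ∈ U, ∀ᶠ (r : ℝ) in 𝓝[>] (0 : ℝ),
      u z ≤ (((2 * Real.pi)⁻¹ *
        ∫ θ in (0:ℝ)..(2 * Real.pi),
          (u (z + (r : ℂ) * Complex.exp ((θ : ℂ) * Complex.I))).toReal : ℝ) : EReal)

/-- `u` is subharmonic on some open neighborhood of `z₀`. -/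
def SubharmonicNear (u : ℂ → EReal) (z₀ : ℂ) : Prop :=
  ∃ U : Set ℂ, IsOpen U ∧ z₀ ∈ U ∧ SubharmonicOn' u U

/-- The Lelong number of `u` at `z₀` equals `γ`:
`(sup_{|z-z₀|=r} u)/log r → γ` as `r → 0⁺`. -/
def HasLelongAt (u : ℂ → EReal) (z₀ : ℂ) (γ : ℝ) : Prop :=
  Tendsto (fun r : ℝ => (⨆ z ∈ sphere z₀ r, u z).toReal / Real.log r)
    (𝓝[>] (0:ℝ)) (𝓝 γ)

/-- `f` is integrable on some ball around `z₀` (local integrability near `z₀`). -/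
def LocInt (f : ℂ → ℝ) (z₀ : ℂ) : Prop :=
  ∃ r > 0, IntegrableOn f (ball z₀ r) volume

/-- Plurisubharmonicity of `u : ℂ × ℂ → EReal` on `U`: upper semicontinuity
together with subharmonicity of the restriction to every complex line. -/
def PSHOn (u : ℂ × ℂ → EReal) (U : Set (ℂ × ℂ)) : Prop :=
  UpperSemicontinuousOn u U ∧
    ∀ a b : ℂ × ℂ, SubharmonicOn' (fun t : ℂ => u (a + t • b)) {t : ℂ | a + t • b ∈ U}

/-- The (two dimensional) Lelong number of `u` at `x` equals `γ`:
`(sup_{|z-x|≤r} u)/log r → γ` as `r → 0⁺`. -/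
def HasLelongAt2 (u : ℂ × ℂ → EReal) (x : ℂ × ℂ) (γ : ℝ) : Prop :=
  Tendsto (fun r : ℝ => (⨆ z ∈ closedBall x r, u z).toReal / Real.log r)
    (𝓝[>] (0:ℝ)) (𝓝 γ)

/-- `f` is integrable on some ball around `x` in `ℂ²`. -/
def LocInt2 (f : ℂ × ℂ → ℝ) (x : ℂ × ℂ) : Prop :=
  ∃ r > 0, IntegrableOn f (ball x r) volume

/-- The k-th term (k ≥ 1) of the Guan–Li series:
`α_k · log(|z₁| + |z₂/k|^{β_k})` with `α_k = M^{-k}`, `β_k = M^{2k}`. -/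
def phiTerm (M : ℝ) (k : ℕ) (z : ℂ × ℂ) : ℝ :=
  M ^ (-(k : ℤ)) * Real.log (‖z.1‖ +
    (‖z.2‖ / (k : ℝ)) ^ (M ^ (2 * k) : ℝ))

/-- The plurisubharmonic weight
`φ(z) = log|z₁| + ∑_{k≥1} M^{-k} log(|z₁| + |z₂/k|^{M^{2k}})`,
with value `⊥ = -∞` on `{z₁ = 0}` (where the series diverges to `-∞`). -/
def phi (M : ℝ) (z : ℂ × ℂ) : EReal :=
  if z.1 = 0 then ⊥ else
    ((Real.log ‖z.1‖ + ∑' k : ℕ, phiTerm M (k + 1) z : ℝ) : EReal)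

/-! Restricted to a complex line `t ↦ a + t • b`, the `k`-th term is `M⁻ᵏ log (exp u + exp v)` with
`u = log ‖f‖`, `v = β_k log ‖g‖` for affine `f`, `g`; where they do not vanish, `u` and `v` are
harmonic, and the tangent-plane inequality for the convex function `log (exp x + exp y)` shows that
`log (exp u + exp v)` inherits the sub-mean-value property (if `g` vanishes at the centre, the term
is simply bounded below by the harmonic `log ‖f‖`). On compact sets avoiding `{z₁ = 0}` the terms
are `O(M⁻ᵏ)`, so the series converges locally uniformly, the sum is continuous there and commutes
with circle averages. Near `{z₁ = 0}` the series is bounded above while `log ‖z₁‖ → -∞`, which gives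
upper semicontinuity. -/

section CircleAverage

open Real (circleAverage)

variable {c : ℂ} {R : ℝ}

theorem Real.mul_add_mul_le_log_mul_exp_add_mul_exp {p q : ℝ} (hp : 0 ≤ p) (hq : 0 ≤ q)
    (hpq : p + q = 1) (x y : ℝ) :
    p * x + q * y ≤ Real.log (p * Real.exp x + q * Real.exp y) := by
  calc p * x + q * y = Real.log (Real.exp (p * x + q * y)) := (Real.log_exp _).symm
    _ ≤ _ := Real.log_le_log (Real.exp_pos _) (convexOn_exp.2 (mem_univ x) (mem_univ y) hp hq hpq)

theorem log_exp_add_exp_le_circleAverage {u v : ℂ → ℝ}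
    (hu : CircleIntegrable u c R) (hv : CircleIntegrable v c R)
    (huv : CircleIntegrable (fun z => Real.log (Real.exp (u z) + Real.exp (v z))) c R)
    (hu_le : u c ≤ circleAverage u c R) (hv_le : v c ≤ circleAverage v c R) :
    Real.log (Real.exp (u c) + Real.exp (v c)) ≤
      circleAverage (fun z => Real.log (Real.exp (u z) + Real.exp (v z))) c R := by
  set S := Real.exp (u c) + Real.exp (v c)
  set p := Real.exp (u c) / S
  set q := Real.exp (v c) / S
  have hS : 0 < S := by positivity
  have hp : 0 ≤ p := by positivity
  have hq : 0 ≤ q := by positivity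
  have hpq : p + q = 1 := by rw [← add_div, div_self hS.ne']
  -- the tangent plane of `log (exp x + exp y)` at `(u c, v c)` lies below it
  have tangent : ∀ z, Real.log S + p * (u z - u c) + q * (v z - v c) ≤
      Real.log (Real.exp (u z) + Real.exp (v z)) := by
    intro z
    have h := Real.mul_add_mul_le_log_mul_exp_add_mul_exp hp hq hpq (u z - u c) (v z - v c)
    have hsplit : Real.exp (u z) + Real.exp (v z) =
        S * (p * Real.exp (u z - u c) + q * Real.exp (v z - v c)) := by
      simp only [p, q, Real.exp_sub]
      field_simp
    rw [hsplit, Real.log_mul hS.ne' (by positivity)]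
    linarith
  have hconst : CircleIntegrable (fun _ => Real.log S - p * u c - q * v c) c R :=
    circleIntegrable_const _ _ _
  calc Real.log S
      ≤ (Real.log S - p * u c - q * v c) + (p * circleAverage u c R + q * circleAverage v c R) := by
        linarith [mul_le_mul_of_nonneg_left hu_le hp, mul_le_mul_of_nonneg_left hv_le hq]
    _ = circleAverage ((fun _ => Real.log S - p * u c - q * v c) + (p • u + q • v)) c R := by
        rw [Real.circleAverage_add hconst ((hu.const_smul (a := p)).add (hv.const_smul (a := q))),
          Real.circleAverage_add (hu.const_smul (a := p)) (hv.const_smul (a := q)),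
          Real.circleAverage_smul, Real.circleAverage_smul, Real.circleAverage_const,
          smul_eq_mul, smul_eq_mul]
    _ ≤ _ := Real.circleAverage_mono (hconst.add ((hu.const_smul (a := p)).add
        (hv.const_smul (a := q)))) huv fun z _ => by
          simp only [Pi.add_apply, Pi.smul_apply, smul_eq_mul]; linarith [tangent z]

theorem log_norm_add_norm_rpow_le_circleAverage {f g : ℂ → ℂ} {β : ℝ} (hβ : 0 < β)
    (hf : AnalyticOnNhd ℂ f (closedBall c |R|)) (hg : AnalyticOnNhd ℂ g (closedBall c |R|))
    (hf₀ : ∀ z ∈ closedBall c |R|, f z ≠ 0) (hg₀ : g c = 0 ∨ ∀ z ∈ closedBall c |R|, g z ≠ 0) :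
    Real.log (‖f c‖ + ‖g c‖ ^ β) ≤
      circleAverage (fun z => Real.log (‖f z‖ + ‖g z‖ ^ β)) c R := by
  have hsphere : sphere c |R| ⊆ closedBall c |R| := sphere_subset_closedBall
  have hlogf : CircleIntegrable (fun z => Real.log ‖f z‖) c R :=
    ((hf.continuousOn.norm.log fun z hz => norm_ne_zero_iff.2 (hf₀ z hz)).mono
      hsphere).circleIntegrable'
  have hint : CircleIntegrable (fun z => Real.log (‖f z‖ + ‖g z‖ ^ β)) c R := by
    refine (ContinuousOn.log (hf.continuousOn.norm.add
      (hg.continuousOn.norm.rpow_const fun _ _ => Or.inr hβ.le)) fun z hz => ?_).mono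
      hsphere |>.circleIntegrable'
    exact (add_pos_of_pos_of_nonneg (norm_pos_iff.2 (hf₀ z hz)) (by positivity)).ne'
  rcases hg₀ with hgc | hg₀
  · rw [hgc, norm_zero, Real.zero_rpow hβ.ne', add_zero,
      ← hf.circleAverage_log_norm_of_ne_zero hf₀]
    exact Real.circleAverage_mono hlogf hint fun z hz =>
      Real.log_le_log (norm_pos_iff.2 (hf₀ z (hsphere hz))) (le_add_of_nonneg_right (by positivity))
  · have hlogg : CircleIntegrable (fun z => β * Real.log ‖g z‖) c R :=
      ((hg.continuousOn.norm.log fun z hz => norm_ne_zero_iff.2 (hg₀ z hz)).const_smul β |>.mono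
        hsphere).circleIntegrable'
    have hexp : ∀ z ∈ closedBall c |R|,
        Real.exp (Real.log ‖f z‖) + Real.exp (β * Real.log ‖g z‖) = ‖f z‖ + ‖g z‖ ^ β := by
      intro z hz
      rw [Real.exp_log (norm_pos_iff.2 (hf₀ z hz)),
        Real.rpow_def_of_pos (norm_pos_iff.2 (hg₀ z hz)), mul_comm]
    have hexp_sphere : EqOn (fun z => Real.log (Real.exp (Real.log ‖f z‖) +
        Real.exp (β * Real.log ‖g z‖))) (fun z => Real.log (‖f z‖ + ‖g z‖ ^ β)) (sphere c |R|) :=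
      fun z hz => by simp only [hexp z (hsphere hz)]
    have h := log_exp_add_exp_le_circleAverage hlogf hlogg
      ((circleIntegrable_congr hexp_sphere).2 hint)
      (hf.circleAverage_log_norm_of_ne_zero hf₀).ge ?_
    · rwa [hexp c (mem_closedBall_self (abs_nonneg R)),
        Real.circleAverage_congr_sphere hexp_sphere] at h
    · rw [show (fun z => β * Real.log ‖g z‖) = fun z => β • Real.log ‖g z‖ from rfl,
        Real.circleAverage_fun_smul, hg.circleAverage_log_norm_of_ne_zero hg₀, smul_eq_mul]

theorem hasSum_circleAverage_tsum {E ι : Type*} [NormedAddCommGroup E] [NormedSpace ℝ E]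
    [CompleteSpace E] [Countable ι] {u : ι → ℂ → E} {B : ι → ℝ}
    (hu : ∀ i, ContinuousOn (u i) (sphere c |R|)) (hB : Summable B)
    (hbound : ∀ i, ∀ z ∈ sphere c |R|, ‖u i z‖ ≤ B i) :
    HasSum (fun i => circleAverage (u i) c R) (circleAverage (fun z => ∑' i, u i z) c R) := by
  simp only [Real.circleAverage_def]
  refine (intervalIntegral.hasSum_integral_of_dominated_convergence (fun i _ => B i)
    (fun i => ?_) (fun i => ?_) (ae_of_all _ fun _ _ => hB) intervalIntegrable_const
    (ae_of_all _ fun θ _ => ?_)).const_smul _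
  · exact ((hu i).comp_continuous (continuous_circleMap c R)
      (circleMap_mem_sphere' c R)).aestronglyMeasurable
  · exact ae_of_all _ fun θ _ => hbound i _ (circleMap_mem_sphere' c R θ)
  · exact (hB.of_norm_bounded fun i => hbound i _ (circleMap_mem_sphere' c R θ)).hasSum

end CircleAverage

section PhiSeries

variable {M : ℝ}

theorem summable_zpow_neg_succ_mul (hM : 1 < M) (L : ℝ) :
    Summable fun k : ℕ => M ^ (-((k + 1 : ℕ) : ℤ)) * L := by
  simp only [zpow_neg, zpow_natCast, ← inv_pow]
  exact ((summable_nat_add_iff 1).2 (summable_geometric_of_lt_one (by positivity)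
    (inv_lt_one_of_one_lt₀ hM))).mul_right L

theorem exists_rpow_div_succ_le (hM : 1 ≤ M) (C : ℝ) :
    ∃ Y, 0 ≤ Y ∧ ∀ k : ℕ, ∀ x ∈ Icc 0 C, (x / (k + 1 : ℕ)) ^ (M ^ (2 * (k + 1)) : ℝ) ≤ Y := by
  refine ⟨max 1 (C ^ (M ^ (2 * (⌈C⌉₊ + 1)) : ℝ)), zero_le_one.trans (le_max_left _ _),
    fun k x ⟨hx₀, hxC⟩ => ?_⟩
  have hk : (0 : ℝ) < (k + 1 : ℕ) := by positivity
  rcases le_or_gt C (k + 1 : ℕ) with hCk | hkC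
  · exact (Real.rpow_le_one (by positivity) ((div_le_one hk).2 (hxC.trans hCk))
      (by positivity)).trans (le_max_left _ _)
  · have hC : 1 ≤ C := le_trans (by simp) hkC.le
    have hk_ceil : k + 1 ≤ ⌈C⌉₊ + 1 := by
      have : k + 1 < ⌈C⌉₊ := Nat.lt_ceil.2 hkC
      omega
    calc (x / (k + 1 : ℕ)) ^ (M ^ (2 * (k + 1)) : ℝ)
        ≤ C ^ (M ^ (2 * (k + 1)) : ℝ) := Real.rpow_le_rpow (by positivity)
          ((div_le_self hx₀ (by simp)).trans hxC) (by positivity)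
      _ ≤ C ^ (M ^ (2 * (⌈C⌉₊ + 1)) : ℝ) := Real.rpow_le_rpow_of_exponent_le hC
          (pow_le_pow_right₀ hM (by omega))
      _ ≤ _ := le_max_right _ _

theorem zpow_neg_mul_log_le_phiTerm (hM : 0 < M) (n : ℕ) {z : ℂ × ℂ} (hz : z.1 ≠ 0) :
    M ^ (-(n : ℤ)) * Real.log ‖z.1‖ ≤ phiTerm M n z :=
  mul_le_mul_of_nonneg_left (Real.log_le_log (norm_pos_iff.2 hz)
    (le_add_of_nonneg_right (by positivity))) (by positivity)

theorem exists_phiTerm_le (hM : 1 ≤ M) (C : ℝ) :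
    ∃ Y, 0 ≤ Y ∧ ∀ k : ℕ, ∀ z : ℂ × ℂ, z.1 ≠ 0 → ‖z.2‖ ≤ C →
      phiTerm M (k + 1) z ≤ M ^ (-((k + 1 : ℕ) : ℤ)) * Real.log (‖z.1‖ + Y) := by
  obtain ⟨Y, hY₀, hY⟩ := exists_rpow_div_succ_le hM C
  refine ⟨Y, hY₀, fun k z hz hzC => mul_le_mul_of_nonneg_left (Real.log_le_log ?_ ?_) ?_⟩
  · exact add_pos_of_pos_of_nonneg (norm_pos_iff.2 hz) (by positivity)
  · exact add_le_add_right (hY k _ ⟨norm_nonneg _, hzC⟩) _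
  · exact zpow_nonneg (by linarith) _

theorem IsCompact.exists_summable_abs_phiTerm_le (hM : 1 < M) {K : Set (ℂ × ℂ)}
    (hK : IsCompact K) (hK₀ : ∀ z ∈ K, z.1 ≠ 0) :
    ∃ B : ℕ → ℝ, Summable B ∧ ∀ k : ℕ, ∀ z ∈ K, |phiTerm M (k + 1) z| ≤ B k := by
  obtain ⟨D, hD⟩ := hK.isBounded.exists_norm_le
  obtain ⟨A, hA⟩ := hK.exists_bound_of_continuousOn (f := fun z => z.1⁻¹)
    (continuous_fst.continuousOn.inv₀ hK₀)
  obtain ⟨Y, hY₀, hY⟩ := exists_phiTerm_le hM.le D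
  set a := (max A 1)⁻¹
  refine ⟨fun k => |M ^ (-((k + 1 : ℕ) : ℤ)) * Real.log a| +
      |M ^ (-((k + 1 : ℕ) : ℤ)) * Real.log (D + Y)|,
    (summable_zpow_neg_succ_mul hM _).abs.add (summable_zpow_neg_succ_mul hM _).abs,
    fun k z hz => ?_⟩
  have hz₁ : 0 < ‖z.1‖ := norm_pos_iff.2 (hK₀ z hz)
  have hw : 0 ≤ M ^ (-((k + 1 : ℕ) : ℤ)) := zpow_nonneg (by linarith) _
  have ha : a ≤ ‖z.1‖ := inv_le_of_inv_le₀ hz₁ <| by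
    simpa only [norm_inv] using (hA z hz).trans (le_max_left A 1)
  have hlo : M ^ (-((k + 1 : ℕ) : ℤ)) * Real.log a ≤ phiTerm M (k + 1) z :=
    (mul_le_mul_of_nonneg_left (Real.log_le_log (by positivity) ha) hw).trans
      (zpow_neg_mul_log_le_phiTerm (by linarith) _ (hK₀ z hz))
  have hhi : phiTerm M (k + 1) z ≤ M ^ (-((k + 1 : ℕ) : ℤ)) * Real.log (D + Y) := by
    refine (hY k z (hK₀ z hz) ((norm_snd_le z).trans (hD z hz))).trans
      (mul_le_mul_of_nonneg_left (Real.log_le_log ?_ ?_) hw)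
    · positivity
    · exact add_le_add_left ((norm_fst_le z).trans (hD z hz)) _
  exact (abs_le_max_abs_abs hlo hhi).trans (max_le_add_of_nonneg (abs_nonneg _) (abs_nonneg _))

def phiReal (M : ℝ) (z : ℂ × ℂ) : ℝ := Real.log ‖z.1‖ + ∑' k : ℕ, phiTerm M (k + 1) z

theorem phi_of_ne_zero {z : ℂ × ℂ} (hz : z.1 ≠ 0) : phi M z = phiReal M z := if_neg hz

theorem phi_of_eq_zero {z : ℂ × ℂ} (hz : z.1 = 0) : phi M z = ⊥ := if_pos hz

theorem summable_phiTerm (hM : 1 < M) {z : ℂ × ℂ} (hz : z.1 ≠ 0) :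
    Summable fun k : ℕ => phiTerm M (k + 1) z := by
  obtain ⟨B, hB, hbound⟩ := isCompact_singleton.exists_summable_abs_phiTerm_le hM
    (fun w hw => (mem_singleton_iff.1 hw).symm ▸ hz)
  exact hB.of_norm_bounded fun k => hbound k z rfl

theorem continuousOn_phiTerm (n : ℕ) : ContinuousOn (phiTerm M n) {z | z.1 ≠ 0} := by
  refine continuousOn_const.mul (ContinuousOn.log ?_ fun z hz => ?_)
  · exact (continuous_fst.norm.add ((continuous_snd.norm.div_const _).rpow_const
      fun _ => Or.inr ((even_two_mul n).pow_nonneg M))).continuousOn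
  · exact (add_pos_of_pos_of_nonneg (norm_pos_iff.2 hz) (by positivity)).ne'

theorem continuousOn_tsum_phiTerm (hM : 1 < M) :
    ContinuousOn (fun z => ∑' k : ℕ, phiTerm M (k + 1) z) {z | z.1 ≠ 0} := by
  intro z hz
  obtain ⟨K, hK, hzK, hKU⟩ := exists_compact_subset (isOpen_ne.preimage continuous_fst) hz
  obtain ⟨B, hB, hbound⟩ := hK.exists_summable_abs_phiTerm_le hM hKU
  exact ((continuousOn_tsum (fun k => (continuousOn_phiTerm (k + 1)).mono hKU) hB
    hbound).continuousAt (mem_interior_iff_mem_nhds.1 hzK)).continuousWithinAt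

theorem continuousOn_phiReal (hM : 1 < M) : ContinuousOn (phiReal M) {z | z.1 ≠ 0} :=
  (continuous_fst.norm.continuousOn.log fun _ hz => norm_ne_zero_iff.2 hz).add
    (continuousOn_tsum_phiTerm hM)

theorem exists_tsum_phiTerm_le (hM : 1 < M) (C : ℝ) :
    ∃ B, ∀ z : ℂ × ℂ, z.1 ≠ 0 → ‖z.1‖ ≤ 1 → ‖z.2‖ ≤ C → ∑' k : ℕ, phiTerm M (k + 1) z ≤ B := by
  obtain ⟨Y, hY₀, hY⟩ := exists_phiTerm_le hM.le C
  refine ⟨∑' k : ℕ, M ^ (-((k + 1 : ℕ) : ℤ)) * Real.log (1 + Y), fun z hz₁ hz₁_le hz₂ => ?_⟩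
  refine (summable_phiTerm hM hz₁).tsum_le_tsum (fun k => (hY k z hz₁ hz₂).trans ?_)
    (summable_zpow_neg_succ_mul hM _)
  exact mul_le_mul_of_nonneg_left (Real.log_le_log (by positivity) (by linarith))
    (zpow_nonneg (by linarith) _)

theorem upperSemicontinuous_phi (hM : 1 < M) : UpperSemicontinuous (phi M) := by
  intro z
  rcases eq_or_ne z.1 0 with hz | hz
  · intro y hy
    rw [phi_of_eq_zero hz] at hy
    obtain ⟨c, -, hcy⟩ := EReal.lt_iff_exists_real_btwn.1 hy
    obtain ⟨B, hB⟩ := exists_tsum_phiTerm_le hM (‖z.2‖ + 1)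
    have h₁ : ∀ᶠ w in 𝓝 z, ‖w.1‖ < min 1 (Real.exp (c - B)) :=
      continuous_fst.norm.continuousAt.eventually_lt continuousAt_const (by simp [hz, Real.exp_pos])
    have h₂ : ∀ᶠ w in 𝓝 z, ‖w.2‖ < ‖z.2‖ + 1 :=
      continuous_snd.norm.continuousAt.eventually_lt continuousAt_const (lt_add_one _)
    filter_upwards [h₁, h₂] with w hw₁ hw₂
    rcases eq_or_ne w.1 0 with hw | hw
    · rw [phi_of_eq_zero hw]
      exact bot_lt_iff_ne_bot.2 (ne_bot_of_gt hcy)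
    · refine lt_of_le_of_lt ?_ hcy
      rw [phi_of_ne_zero hw, EReal.coe_le_coe_iff, phiReal]
      have hlog : Real.log ‖w.1‖ < c - B :=
        (Real.log_lt_iff_lt_exp (norm_pos_iff.2 hw)).2 (hw₁.trans_le (min_le_right _ _))
      linarith [hB w hw (hw₁.le.trans (min_le_left _ _)) hw₂.le]
  · have hnear : ∀ᶠ w in 𝓝 z, w.1 ≠ 0 := continuous_fst.continuousAt.eventually_ne hz
    exact (continuous_coe_real_ereal.continuousAt.comp
      ((continuousOn_phiReal hM).continuousAt hnear)).congr
      (hnear.mono fun w hw => (phi_of_ne_zero hw).symm) |>.upperSemicontinuousAt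

end PhiSeries

section Lines

open Real (circleAverage)

variable {M : ℝ} {a b : ℂ × ℂ} {t₀ : ℂ} {r : ℝ}

theorem phiTerm_le_circleAverage (hM : 0 < M) {n : ℕ} (hn : n ≠ 0)
    (h₁ : ∀ t ∈ closedBall t₀ |r|, (a + t • b).1 ≠ 0)
    (h₂ : (a + t₀ • b).2 = 0 ∨ ∀ t ∈ closedBall t₀ |r|, (a + t • b).2 ≠ 0) :
    phiTerm M n (a + t₀ • b) ≤ circleAverage (fun t => phiTerm M n (a + t • b)) t₀ r := by
  have hterm : ∀ z : ℂ × ℂ, phiTerm M n z =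
      M ^ (-(n : ℤ)) • Real.log (‖z.1‖ + ‖z.2 / n‖ ^ (M ^ (2 * n) : ℝ)) := by
    intro z
    simp only [phiTerm, norm_div, Complex.norm_natCast, smul_eq_mul]
  simp only [hterm]
  rw [Real.circleAverage_fun_smul]
  refine smul_le_smul_of_nonneg_left (log_norm_add_norm_rpow_le_circleAverage (by positivity)
    (fun t _ => (by fun_prop : Differentiable ℂ fun t : ℂ => (a + t • b).1).analyticAt t)
    (fun t _ => (by fun_prop : Differentiable ℂ fun t : ℂ => (a + t • b).2 / n).analyticAt t)
    h₁ ?_) (by positivity)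
  simpa [hn] using h₂

theorem phiReal_le_circleAverage (hM : 1 < M)
    (h₁ : ∀ t ∈ closedBall t₀ |r|, (a + t • b).1 ≠ 0)
    (h₂ : (a + t₀ • b).2 = 0 ∨ ∀ t ∈ closedBall t₀ |r|, (a + t • b).2 ≠ 0) :
    phiReal M (a + t₀ • b) ≤ circleAverage (fun t => phiReal M (a + t • b)) t₀ r := by
  have hline : Continuous fun t : ℂ => a + t • b := by fun_prop
  have hmaps : MapsTo (fun t => a + t • b) (sphere t₀ |r|) {z | z.1 ≠ 0} :=
    fun t ht => h₁ t (sphere_subset_closedBall ht)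
  obtain ⟨B, hB, hbound⟩ := ((isCompact_sphere t₀ |r|).image hline).exists_summable_abs_phiTerm_le
    hM (by rintro _ ⟨t, ht, rfl⟩; exact hmaps ht)
  have hterms := hasSum_circleAverage_tsum (u := fun k t => phiTerm M (k + 1) (a + t • b))
    (fun k => (continuousOn_phiTerm (k + 1)).comp hline.continuousOn hmaps) hB
    (fun k t ht => hbound k _ ⟨t, ht, rfl⟩)
  have hlog : circleAverage (fun t => Real.log ‖(a + t • b).1‖) t₀ r = Real.log ‖(a + t₀ • b).1‖ :=
    AnalyticOnNhd.circleAverage_log_norm_of_ne_zero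
      (fun t _ => (by fun_prop : Differentiable ℂ fun t : ℂ => (a + t • b).1).analyticAt t) h₁
  have hint₁ : CircleIntegrable (fun t => Real.log ‖(a + t • b).1‖) t₀ r :=
    ((continuous_fst.norm.continuousOn.log fun _ hz => norm_ne_zero_iff.2 hz).comp
      hline.continuousOn hmaps).circleIntegrable'
  have hint₂ : CircleIntegrable (fun t => ∑' k : ℕ, phiTerm M (k + 1) (a + t • b)) t₀ r :=
    ((continuousOn_tsum_phiTerm hM).comp hline.continuousOn hmaps).circleIntegrable'
  rw [phiReal, show (fun t => phiReal M (a + t • b)) = fun t => Real.log ‖(a + t • b).1‖ +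
      ∑' k : ℕ, phiTerm M (k + 1) (a + t • b) from rfl, Real.circleAverage_fun_add hint₁ hint₂,
    hlog]
  exact add_le_add_right (hasSum_le (fun k => phiTerm_le_circleAverage (zero_lt_one.trans hM)
    k.succ_ne_zero h₁ h₂) (summable_phiTerm hM (h₁ t₀ (mem_closedBall_self (abs_nonneg r)))).hasSum
    hterms) _

theorem eventually_phi_le_circleAverage (hM : 1 < M) (a b : ℂ × ℂ) (t₀ : ℂ) :
    ∀ᶠ r in 𝓝[>] (0 : ℝ),
      phi M (a + t₀ • b) ≤
        ((circleAverage (fun t => (phi M (a + t • b)).toReal) t₀ r : ℝ) : EReal) := by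
  rcases eq_or_ne (a + t₀ • b).1 0 with h | h
  · exact Eventually.of_forall fun r => (phi_of_eq_zero h).symm ▸ bot_le
  have hline : Continuous fun t : ℂ => a + t • b := by fun_prop
  have h₁ : ∀ᶠ r in 𝓝 (0 : ℝ), ∀ t ∈ closedBall t₀ r, (a + t • b).1 ≠ 0 :=
    eventually_closedBall_subset ((continuous_fst.comp hline).continuousAt.eventually_ne h)
  have h₂ : ∀ᶠ r in 𝓝 (0 : ℝ),
      (a + t₀ • b).2 = 0 ∨ ∀ t ∈ closedBall t₀ r, (a + t • b).2 ≠ 0 := by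
    rcases eq_or_ne (a + t₀ • b).2 0 with h' | h'
    · exact Eventually.of_forall fun _ => Or.inl h'
    · exact (eventually_closedBall_subset
        ((continuous_snd.comp hline).continuousAt.eventually_ne h')).mono fun _ => Or.inr
  filter_upwards [nhdsWithin_le_nhds h₁, nhdsWithin_le_nhds h₂, self_mem_nhdsWithin]
    with r hr₁ hr₂ (hr : 0 < r)
  rw [← abs_of_pos hr] at hr₁ hr₂
  have hsphere : EqOn (fun t => (phi M (a + t • b)).toReal) (fun t => phiReal M (a + t • b))
      (sphere t₀ |r|) := fun t ht => by
    simp only [phi_of_ne_zero (hr₁ t (sphere_subset_closedBall ht)), EReal.toReal_coe]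
  rw [phi_of_ne_zero h, Real.circleAverage_congr_sphere hsphere, EReal.coe_le_coe_iff]
  exact phiReal_le_circleAverage hM hr₁ hr₂

end Lines

/-- Fix `M ≥ 2`, `α_k = M^{-k}`, `β_k = M^{2k}`. The series
`φ(z) = log|z₁| + ∑_{k≥1} α_k log(|z₁| + |z₂/k|^{β_k})` converges (for `z₁ ≠ 0`)
and defines a plurisubharmonic function on `ℂ²` which is not identically `-∞`. -/
theorem stmt5 (M : ℝ) (hM : 2 ≤ M) :
    (∀ z : ℂ × ℂ, z.1 ≠ 0 → Summable (fun k : ℕ => phiTerm M (k + 1) z)) ∧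
      PSHOn (phi M) univ ∧
      ∃ z : ℂ × ℂ, phi M z ≠ ⊥ := by
  have hM₁ : 1 < M := by linarith
  have husc := upperSemicontinuous_phi hM₁
  refine ⟨fun z hz => summable_phiTerm hM₁ hz, ⟨husc.upperSemicontinuousOn _, fun a b => ?_⟩,
    ⟨(1, 0), by rw [phi_of_ne_zero one_ne_zero]; exact EReal.coe_ne_bot _⟩⟩
  exact ⟨(husc.comp (by fun_prop : Continuous fun t : ℂ => a + t • b)).upperSemicontinuousOn _,
    fun t₀ _ => eventually_phi_le_circleAverage hM₁ a b t₀⟩
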